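/- arXiv:math/0009217 — 2 statements merged into one kernel-verified Lean document; each statement's English description precedes it below -/
import Mathlib

section
/- The four complex numbers exp(2πiλ1), exp(2πiλ2), exp(−2πiλ1), exp(−2πiλ2) are not all equal to 1; equivalently, λ1 and λ2 are not both integers. -/
/-! Positivity of the masses gives `0 < S2 / S1 ^ 2`, hence `0 ≤ √θ < 12`, so `λ1` lies strictly
between `3` and `4`: it is not an integer, and then `exp (2πiλ1) ≠ 1`. -/

open Complex Real

theorem Complex.exp_two_pi_mul_I_mul_ofReal_eq_one_iff (x : ℝ) :
    exp (2 * π * I * x) = 1 ↔ ∃ n : ℤ, x = n := by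
  rw [exp_eq_one_iff]
  have hne : (2 * π * I : ℂ) ≠ 0 := by simp [pi_ne_zero]
  refine exists_congr fun n => ?_
  rw [mul_comm (n : ℂ), mul_right_inj' hne]
  exact_mod_cast Iff.rfl

theorem Int.not_exists_cast_eq_of_lt_of_lt {x : ℝ} (n : ℤ) (h₁ : n < x) (h₂ : x < n + 1) :
    ¬ ∃ m : ℤ, x = m := by
  rintro ⟨m, rfl⟩
  have : n < m := by exact_mod_cast h₁
  have : m < n + 1 := by exact_mod_cast h₂
  omega

theorem Real.sqrt_thirteen_add_sqrt_mem_Ioo {t : ℝ} (ht : t < 144) :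
    √(13 + √t) ∈ Set.Ioo 3 5 := by
  have h₀ : 0 ≤ √t := sqrt_nonneg t
  have h₁₂ : √t < 12 := (sqrt_lt' (by norm_num)).2 (by linarith)
  constructor
  · exact (lt_sqrt (by norm_num)).2 (by linarith)
  · exact (sqrt_lt' (by norm_num)).2 (by linarith)

open Complex in
theorem monodromy_spectrum_not_trivial
    (m1 m2 m3 : ℝ) (hm1 : 0 < m1) (hm2 : 0 < m2) (hm3 : 0 < m3) :
    let S1 : ℝ := m1 + m2 + m3
    let S2 : ℝ := m1 * m2 + m2 * m3 + m1 * m3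
    let θ : ℝ := 144 * (1 - 3 * S2 / S1 ^ 2)
    let lam1 : ℝ := 3 / 2 + (1 / 2) * Real.sqrt (13 + Real.sqrt θ)
    let lam2 : ℝ := 3 / 2 + (1 / 2) * Real.sqrt (13 - Real.sqrt θ)
    (¬ (Complex.exp (2 * Real.pi * I * lam1) = 1 ∧
        Complex.exp (2 * Real.pi * I * lam2) = 1 ∧
        Complex.exp (-(2 * Real.pi * I * lam1)) = 1 ∧
        Complex.exp (-(2 * Real.pi * I * lam2)) = 1)) ∧
    ¬ ((∃ n : ℤ, lam1 = (n : ℝ)) ∧ (∃ n : ℤ, lam2 = (n : ℝ))) := by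
  intro S1 S2 θ lam1 lam2
  have hθ : θ < 144 := by
    have : 0 < S2 / S1 ^ 2 := by positivity
    change 144 * (1 - 3 * S2 / S1 ^ 2) < 144
    rw [mul_div_assoc]
    linarith
  obtain ⟨hlo, hhi⟩ := sqrt_thirteen_add_sqrt_mem_Ioo hθ
  have hlam1_eq : lam1 = 3 / 2 + 1 / 2 * √(13 + √θ) := rfl
  have hlam1 : ¬ ∃ n : ℤ, lam1 = n :=
    Int.not_exists_cast_eq_of_lt_of_lt 3 (by push_cast; linarith) (by push_cast; linarith)
  exact ⟨fun h => hlam1 ((exp_two_pi_mul_I_mul_ofReal_eq_one_iff lam1).1 h.1),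
    fun h => hlam1 h.1⟩
end

section
/- Let M be a 4×4 complex matrix with M² = 0 and T = I + M. If the pair (p, q), with q ≠ 0, is invariant under T, then for every t ∈ ℂ and every x ∈ ℂ⁴ one has p(x + t·Mx)·q(x) = p(x)·q(x + t·Mx); that is, the rational function J = p/q is invariant under the whole one-parameter group {I + t·M : t ∈ ℂ}. -/
/-!
Put `v = M x`. Since `M² = 0`, `T = I + M` moves the line `s ↦ x + s v` along itself by one
step, so the restrictions `P(s) = p(x + s v)` and `Q(s) = q(x + s v)` satisfy
`P(s + 1) Q(s) = P(s) Q(s + 1)`. Cancelling in the domain `ℂ[X]` this iterates to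
`P(s + n) Q(s) = P(s) Q(s + n)` for every `n ∈ ℕ`, and a polynomial identity in `r` holding at
infinitely many points `r = n` holds for every `r`.
-/

open MvPolynomial

/-- `(p, q)` is invariant under `T` : `p(Tx)·q(x) = p(x)·q(Tx)` for all `x ∈ ℂ⁴`,
i.e. the rational function `J = p/q` satisfies `J ∘ T = J`. -/
def PairInvariant (p q : MvPolynomial (Fin 4) ℂ)
    (T : Matrix (Fin 4) (Fin 4) ℂ) : Prop :=
  ∀ x : Fin 4 → ℂ, eval (T.mulVec x) p * eval x q = eval x p * eval (T.mulVec x) q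

open scoped Matrix

namespace Polynomial

variable {R : Type*} [CommRing R] [IsDomain R] {P Q : R[X]}

theorem taylor_natCast_mul_eq_of_taylor_one (h : taylor 1 P * Q = P * taylor 1 Q) (n : ℕ) :
    taylor (n : R) P * Q = P * taylor (n : R) Q := by
  rcases eq_or_ne Q 0 with rfl | hQ
  · simp
  induction n with
  | zero => simp
  | succ n ih =>
    have shifted : taylor ((n + 1 : ℕ) : R) P * taylor (n : R) Q
        = taylor (n : R) P * taylor ((n + 1 : ℕ) : R) Q := by
      simpa [taylor_taylor, add_comm] using congrArg (taylor (n : R)) h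
    have hQn : taylor (n : R) Q ≠ 0 := by simpa using hQ
    apply mul_left_cancel₀ hQn
    linear_combination Q * shifted + taylor ((n + 1 : ℕ) : R) Q * ih

theorem eval_add_mul_eval_eq_of_taylor_one [CharZero R] (h : taylor 1 P * Q = P * taylor 1 Q)
    (s r : R) : P.eval (s + r) * Q.eval s = P.eval s * Q.eval (s + r) := by
  have hpoly : taylor s P * C (Q.eval s) = C (P.eval s) * taylor s Q := by
    refine eq_of_infinite_eval_eq _ _ ((Set.infinite_range_of_injective Nat.cast_injective).mono ?_)
    rintro _ ⟨n, rfl⟩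
    simpa [taylor_eval, add_comm] using congrArg (eval s) (taylor_natCast_mul_eq_of_taylor_one h n)
  simpa [taylor_eval, add_comm] using congrArg (eval r) hpoly

end Polynomial

namespace MvPolynomial

variable {σ R : Type*} [CommRing R]

noncomputable def restrictLine (x v : σ → R) : MvPolynomial σ R →ₐ[R] Polynomial R :=
  aeval fun i => Polynomial.C (x i) + Polynomial.C (v i) * Polynomial.X

theorem eval_restrictLine (x v : σ → R) (p : MvPolynomial σ R) (s : R) :
    (restrictLine x v p).eval s = eval (x + s • v) p := by
  rw [← Polynomial.coe_aeval_eq_eval, restrictLine, ← AlgHom.comp_apply, comp_aeval,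
    ← coe_aeval_eq_eval]
  exact congrArg (aeval · p) (by ext i; simp; ring)

end MvPolynomial

open Polynomial in
theorem PairInvariant.taylor_one_restrictLine {p q : MvPolynomial (Fin 4) ℂ}
    {T : Matrix (Fin 4) (Fin 4) ℂ} (hinv : PairInvariant p q T) {x v : Fin 4 → ℂ}
    (hT : ∀ s : ℂ, T *ᵥ (x + s • v) = x + (s + 1) • v) :
    taylor 1 (restrictLine x v p) * restrictLine x v q
      = restrictLine x v p * taylor 1 (restrictLine x v q) :=
  Polynomial.funext fun s => by
    simpa [taylor_eval, eval_restrictLine, hT] using hinv (x + s • v)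

theorem invariant_pair_one_parameter_group_general
    (M : Matrix (Fin 4) (Fin 4) ℂ) (hM : M ^ 2 = 0)
    (p q : MvPolynomial (Fin 4) ℂ)
    (hinv : PairInvariant p q (1 + M)) :
    ∀ t : ℂ, ∀ x : Fin 4 → ℂ,
      eval (x + t • M.mulVec x) p * eval x q
        = eval x p * eval (x + t • M.mulVec x) q := by
  intro t x
  have hMMx : M *ᵥ (M *ᵥ x) = 0 := by
    rw [Matrix.mulVec_mulVec, ← sq, hM, Matrix.zero_mulVec]
  have hT : ∀ s : ℂ, (1 + M) *ᵥ (x + s • M *ᵥ x) = x + (s + 1) • M *ᵥ x := fun s => by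
    rw [Matrix.add_mulVec, Matrix.one_mulVec, Matrix.mulVec_add, Matrix.mulVec_smul, hMMx]
    module
  simpa [eval_restrictLine] using
    Polynomial.eval_add_mul_eval_eq_of_taylor_one (hinv.taylor_one_restrictLine hT) 0 t

theorem invariant_pair_one_parameter_group
    (M : Matrix (Fin 4) (Fin 4) ℂ) (hM : M ^ 2 = 0)
    (p q : MvPolynomial (Fin 4) ℂ) (hq : q ≠ 0)
    (hinv : PairInvariant p q (1 + M)) :
    ∀ t : ℂ, ∀ x : Fin 4 → ℂ,
      eval (x + t • M.mulVec x) p * eval x q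
        = eval x p * eval (x + t • M.mulVec x) q :=
  invariant_pair_one_parameter_group_general M hM p q hinv
end
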